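/- Let ρ be a probability measure on a measurable space X, let κ be a Markov kernel from X to a measurable space Z, and let μ̄ = ∫ κ(x) dρ(x) be the mixture (marginal) measure. Then for every probability measure ν on Z such that the integrals below are defined and finite, ∫ KL(κ(x) ‖ μ̄) dρ(x) ≤ ∫ KL(κ(x) ‖ ν) dρ(x); that is, the marginal μ̄ minimizes the average KL divergence from the conditionals κ(x) among all probability measures ν on Z. -/

import Mathlib

open MeasureTheory ProbabilityTheory
open scoped ENNReal Classical

/-- The Kullback–Leibler divergence between two measures, equal to `∫ log (dμ/dν) dμ`
when `μ ≪ ν` (and this integral is defined), and `+∞` otherwise. -/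
noncomputable def klDiv {α : Type*} [MeasurableSpace α] (μ ν : Measure α) : ℝ≥0∞ :=
  if μ ≪ ν ∧ Integrable (llr μ ν) μ then ENNReal.ofReal (∫ x, llr μ ν x ∂μ) else ⊤

lemma real_mul_neg_log_le_one {r : ℝ} (hr : 0 ≤ r) : r * (-Real.log r) ≤ 1 := by
  rcases hr.eq_or_lt with h | h
  · simp [← h]
  rcases le_or_gt (Real.log r) 0 with hl | hl
  · calc r * (-Real.log r) ≤ r * r⁻¹ := by
          refine mul_le_mul_of_nonneg_left ?_ hr
          have h2 := Real.log_le_sub_one_of_pos (inv_pos.2 h)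
          rw [Real.log_inv] at h2
          linarith
      _ = 1 := mul_inv_cancel₀ h.ne'
  · nlinarith

/-- The negative part of the log-likelihood ratio has `μ`-lintegral at most `ξ(univ)`. -/
lemma lintegral_ofReal_neg_llr_le {Z : Type*} [MeasurableSpace Z] (μ ξ : Measure Z)
    [IsFiniteMeasure μ] [IsFiniteMeasure ξ] (hμξ : μ ≪ ξ) :
    ∫⁻ z, ENNReal.ofReal (-llr μ ξ z) ∂μ ≤ ξ Set.univ := by
  have hgm : Measurable fun z => ENNReal.ofReal (-llr μ ξ z) :=
    (measurable_llr μ ξ).neg.ennreal_ofReal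
  rw [← MeasureTheory.lintegral_rnDeriv_mul hμξ hgm.aemeasurable]
  calc ∫⁻ z, (μ.rnDeriv ξ z * ENNReal.ofReal (-llr μ ξ z)) ∂ξ
      ≤ ∫⁻ _, 1 ∂ξ := by
        refine lintegral_mono fun z => ?_
        rcases eq_or_ne (μ.rnDeriv ξ z) ⊤ with h | h
        · simp [llr, h]
        · nth_rw 1 [← ENNReal.ofReal_toReal h]
          rw [llr, ← ENNReal.ofReal_mul ENNReal.toReal_nonneg, ← ENNReal.ofReal_one]
          exact ENNReal.ofReal_le_ofReal (real_mul_neg_log_le_one ENNReal.toReal_nonneg)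
    _ = ξ Set.univ := by simp

/-- Gibbs' inequality. -/
lemma integral_llr_nonneg' {Z : Type*} [MeasurableSpace Z] (μ ξ : Measure Z)
    [IsProbabilityMeasure μ] [IsProbabilityMeasure ξ] (hμξ : μ ≪ ξ)
    (h_int : Integrable (llr μ ξ) μ) : 0 ≤ ∫ z, llr μ ξ z ∂μ := by
  have h1 : Integrable (fun z => (ξ.rnDeriv μ z).toReal) μ :=
    Measure.integrable_toReal_rnDeriv
  have h2 : ∫ z, (ξ.rnDeriv μ z).toReal ∂μ ≤ 1 := by
    have := Measure.setIntegral_toReal_rnDeriv_le (μ := ξ) (ν := μ) (s := Set.univ)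
      (measure_ne_top ξ _)
    simpa [setIntegral_univ] using this
  have h3 : ∫ z, (1 - (ξ.rnDeriv μ z).toReal) ∂μ ≤ ∫ z, llr μ ξ z ∂μ := by
    refine integral_mono_ae ((integrable_const 1).sub h1) h_int ?_
    filter_upwards [exp_neg_llr hμξ] with z hz
    have := Real.add_one_le_exp (-llr μ ξ z)
    rw [hz] at this
    linarith
  have h4 : ∫ z, (1 - (ξ.rnDeriv μ z).toReal) ∂μ = 1 - ∫ z, (ξ.rnDeriv μ z).toReal ∂μ := by
    rw [integral_sub (integrable_const 1) h1]
    simp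
  linarith

lemma ofReal_abs_le {a : ℝ} : ENNReal.ofReal |a| ≤ ENNReal.ofReal a + ENNReal.ofReal (-a) := by
  rcases le_total 0 a with h | h
  · rw [abs_of_nonneg h]; exact le_self_add
  · rw [abs_of_nonpos h]; exact le_add_self

lemma lintegral_ofReal_lt_top_of_integrable {Z : Type*} [MeasurableSpace Z] {μ : Measure Z}
    {f : Z → ℝ} (hf : Integrable f μ) : ∫⁻ z, ENNReal.ofReal (f z) ∂μ < ⊤ := by
  exact lt_of_le_of_lt (lintegral_mono fun z => Real.ofReal_le_enorm (f z)) hf.2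

/-- Pointwise key inequality. -/
lemma claimA {Z : Type*} [MeasurableSpace Z] (μ μb ν : Measure Z)
    [IsProbabilityMeasure μ] [IsProbabilityMeasure μb] [IsProbabilityMeasure ν]
    (hμbν : μb ≪ ν) (hS : μ {z | μb.rnDeriv ν z = 0} = 0) :
    klDiv μ μb + ∫⁻ z, ENNReal.ofReal (llr μb ν z) ∂μ
      ≤ klDiv μ ν + ∫⁻ z, ENNReal.ofReal (-llr μb ν z) ∂μ := by
  by_cases hκν : μ ≪ ν ∧ Integrable (llr μ ν) μ
  swap
  · have : klDiv μ ν = ⊤ := by rw [klDiv, if_neg hκν]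
    rw [this, top_add]; exact le_top
  obtain ⟨hμν, hint⟩ := hκν
  by_cases hN : ∫⁻ z, ENNReal.ofReal (-llr μb ν z) ∂μ = ⊤
  · rw [hN, add_top]; exact le_top
  -- μ ≪ μb
  have hSm : MeasurableSet {z | μb.rnDeriv ν z = 0} :=
    Measure.measurable_rnDeriv μb ν (measurableSet_singleton 0)
  have hμμb : μ ≪ μb := by
    refine Measure.AbsolutelyContinuous.mk fun s hs hμbs => ?_
    have h0 : ∫⁻ z in s, μb.rnDeriv ν z ∂ν = 0 := by
      rw [Measure.setLIntegral_rnDeriv hμbν]; exact hμbs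
    have hae : ∀ᵐ z ∂ν, z ∈ s → μb.rnDeriv ν z = 0 :=
      (setLIntegral_eq_zero_iff hs (Measure.measurable_rnDeriv μb ν)).mp h0
    have hν0 : ν (s ∩ {z | μb.rnDeriv ν z = 0}ᶜ) = 0 := by
      refine measure_mono_null ?_ (ae_iff.mp hae)
      intro z hz
      simp only [Set.mem_setOf_eq, Set.mem_inter_iff, Set.mem_compl_iff] at hz ⊢
      exact fun h => hz.2 (h hz.1)
    have hμ0 : μ (s ∩ {z | μb.rnDeriv ν z = 0}ᶜ) = 0 := hμν hν0
    have hμ1 : μ (s ∩ {z | μb.rnDeriv ν z = 0}) = 0 :=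
      measure_mono_null Set.inter_subset_right hS
    refine le_antisymm ?_ zero_le
    calc μ s ≤ μ (s ∩ {z | μb.rnDeriv ν z = 0}) + μ (s ∩ {z | μb.rnDeriv ν z = 0}ᶜ) :=
          measure_le_inter_add_diff μ s _
      _ = 0 := by rw [hμ0, hμ1, add_zero]
  -- chain rule a.e.
  have hchain : llr μ ν =ᵐ[μ] fun z => llr μ μb z + llr μb ν z := by
    filter_upwards [hμν.ae_le (Measure.rnDeriv_mul_rnDeriv hμμb),
      Measure.rnDeriv_pos hμμb, hμμb.ae_le (Measure.rnDeriv_lt_top μ μb),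
      hμν.ae_le (Measure.rnDeriv_lt_top μb ν),
      (ae_iff.mpr (by simpa using hS) : ∀ᵐ z ∂μ, μb.rnDeriv ν z ≠ 0)]
      with z h1 h2 h3 h4 h5
    have ha : (μ.rnDeriv μb z).toReal ≠ 0 := (ENNReal.toReal_pos h2.ne' h3.ne).ne'
    have hb : (μb.rnDeriv ν z).toReal ≠ 0 := (ENNReal.toReal_pos h5 h4.ne).ne'
    rw [llr, ← h1, Pi.mul_apply, ENNReal.toReal_mul, Real.log_mul ha hb]
    rfl
  -- negative part of llr μ μb is finite
  have hnegA : ∫⁻ z, ENNReal.ofReal (-llr μ μb z) ∂μ < ⊤ :=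
    lt_of_le_of_lt (lintegral_ofReal_neg_llr_le μ μb hμμb) (by simp)
  -- positive part of llr μ μb is finite
  have hposν : ∫⁻ z, ENNReal.ofReal (llr μ ν z) ∂μ < ⊤ :=
    lintegral_ofReal_lt_top_of_integrable hint
  have hposA : ∫⁻ z, ENNReal.ofReal (llr μ μb z) ∂μ < ⊤ := by
    have hb : ∫⁻ z, ENNReal.ofReal (llr μ μb z) ∂μ
        ≤ ∫⁻ z, (ENNReal.ofReal (llr μ ν z) + ENNReal.ofReal (-llr μb ν z)) ∂μ := by
      refine lintegral_mono_ae ?_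
      filter_upwards [hchain] with z hz
      have : llr μ μb z = llr μ ν z + (-llr μb ν z) := by rw [hz]; ring
      rw [this]
      exact ENNReal.ofReal_add_le
    rw [lintegral_add_left ((measurable_llr μ ν).ennreal_ofReal)] at hb
    exact lt_of_le_of_lt hb (ENNReal.add_lt_top.mpr ⟨hposν, (lt_top_iff_ne_top.mpr hN)⟩)
  have hintA : Integrable (llr μ μb) μ := by
    refine ⟨(stronglyMeasurable_llr μ μb).aestronglyMeasurable, ?_⟩
    have hbd : ∫⁻ z, (‖llr μ μb z‖₊ : ℝ≥0∞) ∂μ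
        ≤ ∫⁻ z, (ENNReal.ofReal (llr μ μb z) + ENNReal.ofReal (-llr μ μb z)) ∂μ := by
      refine lintegral_mono fun z => ?_
      rw [← enorm_eq_nnnorm, Real.enorm_eq_ofReal_abs]
      exact ofReal_abs_le
    rw [lintegral_add_left ((measurable_llr μ μb).ennreal_ofReal)] at hbd
    exact lt_of_le_of_lt hbd (ENNReal.add_lt_top.mpr ⟨hposA, hnegA⟩)
  have hinth : Integrable (llr μb ν) μ := by
    have : Integrable (fun z => llr μ ν z - llr μ μb z) μ := hint.sub hintA
    refine this.congr ?_
    filter_upwards [hchain] with z hz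
    rw [hz]; ring
  have hP : ∫⁻ z, ENNReal.ofReal (llr μb ν z) ∂μ < ⊤ :=
    lintegral_ofReal_lt_top_of_integrable hinth
  -- values
  have hklb : klDiv μ μb = ENNReal.ofReal (∫ z, llr μ μb z ∂μ) := if_pos ⟨hμμb, hintA⟩
  have hklν : klDiv μ ν = ENNReal.ofReal (∫ z, llr μ ν z ∂μ) := if_pos ⟨hμν, hint⟩
  have ha0 : 0 ≤ ∫ z, llr μ μb z ∂μ := integral_llr_nonneg' μ μb hμμb hintA
  have hsum : ∫ z, llr μ ν z ∂μ = ∫ z, llr μ μb z ∂μ + ∫ z, llr μb ν z ∂μ := by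
    rw [integral_congr_ae hchain, integral_add hintA hinth]
  have hpn : ∫ z, llr μb ν z ∂μ
      = (∫⁻ z, ENNReal.ofReal (llr μb ν z) ∂μ).toReal
        - (∫⁻ z, ENNReal.ofReal (-llr μb ν z) ∂μ).toReal := by
    rw [integral_eq_lintegral_pos_part_sub_lintegral_neg_part hinth]
  have hb0 : 0 ≤ ∫ z, llr μ ν z ∂μ := integral_llr_nonneg' μ ν hμν hint
  rw [hklb, hklν, ← ENNReal.ofReal_toReal hP.ne, ← ENNReal.ofReal_toReal hN,
    ← ENNReal.ofReal_add ha0 ENNReal.toReal_nonneg,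
    ← ENNReal.ofReal_add hb0 ENNReal.toReal_nonneg]
  refine ENNReal.ofReal_le_ofReal ?_
  rw [hpn] at hsum
  linarith

lemma null_of_top_on {X : Type*} [MeasurableSpace X] {ρ : Measure X} {H : X → ℝ≥0∞} {T : Set X}
    (hT : MeasurableSet T) (htop : ∀ x ∈ T, H x = ⊤) (hfin : ∫⁻ x, H x ∂ρ ≠ ⊤) : ρ T = 0 := by
  by_contra h
  refine hfin ?_
  have hle : ∫⁻ x, T.indicator (fun _ => (⊤ : ℝ≥0∞)) x ∂ρ ≤ ∫⁻ x, H x ∂ρ := by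
    refine lintegral_mono fun x => ?_
    by_cases hx : x ∈ T
    · rw [Set.indicator_of_mem hx, htop x hx]
    · rw [Set.indicator_of_notMem hx]; exact zero_le
  rw [lintegral_indicator hT, setLIntegral_const, ENNReal.top_mul h] at hle
  exact top_le_iff.mp hle

/-- The mixture measure `μ̄ = ρ.bind κ` minimizes the average KL divergence from the
conditionals `κ x`: for every probability measure `ν` on `Z` such that the integrals below
are finite, `∫ KL(κ x ‖ μ̄) dρ ≤ ∫ KL(κ x ‖ ν) dρ`. -/
theorem marginal_minimizes_average_kl {X Z : Type*} [MeasurableSpace X] [MeasurableSpace Z]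
    (ρ : Measure X) [IsProbabilityMeasure ρ]
    (κ : Kernel X Z) [IsMarkovKernel κ] :
    ∀ ν : Measure Z, IsProbabilityMeasure ν →
      ∫⁻ x, klDiv (κ x) ν ∂ρ ≠ ⊤ →
      ∫⁻ x, klDiv (κ x) (ρ.bind κ) ∂ρ ≠ ⊤ →
      ∫⁻ x, klDiv (κ x) (ρ.bind κ) ∂ρ ≤ ∫⁻ x, klDiv (κ x) ν ∂ρ := by
  intro ν hνP H1 H2
  set μb := ρ.bind κ with hμbdef
  have hκm : Measurable (fun x => κ x : X → Measure Z) := κ.measurable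
  have hbind : ∀ {A : Set Z}, MeasurableSet A → μb A = ∫⁻ x, κ x A ∂ρ := fun hA =>
    Measure.bind_apply hA hκm.aemeasurable
  haveI hμbP : IsProbabilityMeasure μb := by
    constructor
    rw [hbind MeasurableSet.univ]
    simp
  -- μb ≪ ν
  have hμbν : μb ≪ ν := by
    refine Measure.AbsolutelyContinuous.mk fun A hA hνA => ?_
    have hmeasA : MeasurableSet {x : X | κ x A ≠ 0} :=
      (κ.measurable_coe hA) (measurableSet_singleton 0) |>.compl
    have hnull : ρ {x : X | κ x A ≠ 0} = 0 := by
      refine null_of_top_on hmeasA (fun x hx => ?_) H1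
      rw [klDiv, if_neg]
      rintro ⟨hac, -⟩
      exact hx (hac hνA)
    rw [hbind hA]
    rw [lintegral_eq_zero_iff (κ.measurable_coe hA)]
    rw [Filter.EventuallyEq, ae_iff]
    simpa using hnull
  -- the zero set of the density
  set S := {z | μb.rnDeriv ν z = 0} with hSdef
  have hSm : MeasurableSet S := Measure.measurable_rnDeriv μb ν (measurableSet_singleton 0)
  have hμbS : μb S = 0 := by
    have h0 : ∫⁻ z in S, μb.rnDeriv ν z ∂ν = 0 := by
      rw [setLIntegral_congr_fun_ae hSm (ae_of_all _ fun z hz => hz)]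
      simp
    rw [← Measure.setLIntegral_rnDeriv hμbν]
    exact h0
  have hbad : ρ {x : X | κ x S ≠ 0} = 0 := by
    have hmeasS : MeasurableSet {x : X | κ x S ≠ 0} :=
      (κ.measurable_coe hSm) (measurableSet_singleton 0) |>.compl
    refine null_of_top_on hmeasS (fun x hx => ?_) H2
    rw [klDiv, if_neg]
    rintro ⟨hac, -⟩
    exact hx (hac hμbS)
  have haeS : ∀ᵐ x ∂ρ, κ x S = 0 := by
    rw [ae_iff]
    simpa using hbad
  -- key pointwise inequality a.e.
  have key : ∀ᵐ x ∂ρ,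
      klDiv (κ x) μb + ∫⁻ z, ENNReal.ofReal (llr μb ν z) ∂κ x
        ≤ klDiv (κ x) ν + ∫⁻ z, ENNReal.ofReal (-llr μb ν z) ∂κ x := by
    filter_upwards [haeS] with x hx
    exact claimA (κ x) μb ν hμbν hx
  -- measurable auxiliary maps
  have hPm : Measurable fun x => ∫⁻ z, ENNReal.ofReal (llr μb ν z) ∂κ x :=
    (Measure.measurable_lintegral (measurable_llr μb ν).ennreal_ofReal).comp hκm
  have hNm : Measurable fun x => ∫⁻ z, ENNReal.ofReal (-llr μb ν z) ∂κ x :=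
    (Measure.measurable_lintegral (measurable_llr μb ν).neg.ennreal_ofReal).comp hκm
  -- integrate the pointwise inequality
  have step : ∫⁻ x, (klDiv (κ x) μb + ∫⁻ z, ENNReal.ofReal (llr μb ν z) ∂κ x) ∂ρ
      ≤ ∫⁻ x, (klDiv (κ x) ν + ∫⁻ z, ENNReal.ofReal (-llr μb ν z) ∂κ x) ∂ρ :=
    lintegral_mono_ae key
  have hsplit1 : ∫⁻ x, (klDiv (κ x) μb + ∫⁻ z, ENNReal.ofReal (llr μb ν z) ∂κ x) ∂ρ
      = ∫⁻ x, klDiv (κ x) μb ∂ρ + ∫⁻ x, ∫⁻ z, ENNReal.ofReal (llr μb ν z) ∂κ x ∂ρ := by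
    rw [lintegral_congr fun x => add_comm _ _, lintegral_add_left hPm, add_comm]
  have hsplit2 : ∫⁻ x, (klDiv (κ x) ν + ∫⁻ z, ENNReal.ofReal (-llr μb ν z) ∂κ x) ∂ρ
      = ∫⁻ x, klDiv (κ x) ν ∂ρ + ∫⁻ x, ∫⁻ z, ENNReal.ofReal (-llr μb ν z) ∂κ x ∂ρ := by
    rw [lintegral_congr fun x => add_comm _ _, lintegral_add_left hNm, add_comm]
  rw [hsplit1, hsplit2] at step
  -- identify the iterated integrals with integrals over μb
  have hIp : ∫⁻ x, ∫⁻ z, ENNReal.ofReal (llr μb ν z) ∂κ x ∂ρ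
      = ∫⁻ z, ENNReal.ofReal (llr μb ν z) ∂μb :=
    (Measure.lintegral_bind hκm.aemeasurable (measurable_llr μb ν).ennreal_ofReal.aemeasurable).symm
  have hIn : ∫⁻ x, ∫⁻ z, ENNReal.ofReal (-llr μb ν z) ∂κ x ∂ρ
      = ∫⁻ z, ENNReal.ofReal (-llr μb ν z) ∂μb :=
    (Measure.lintegral_bind hκm.aemeasurable (measurable_llr μb ν).neg.ennreal_ofReal.aemeasurable).symm
  rw [hIp, hIn] at step
  set Ip := ∫⁻ z, ENNReal.ofReal (llr μb ν z) ∂μb with hIpdef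
  set In := ∫⁻ z, ENNReal.ofReal (-llr μb ν z) ∂μb with hIndef
  have hInfin : In < ⊤ :=
    lt_of_le_of_lt (lintegral_ofReal_neg_llr_le μb ν hμbν) (by simp)
  have hIpfin : Ip ≠ ⊤ := by
    intro htop
    rw [htop, add_top] at step
    have : ∫⁻ x, klDiv (κ x) ν ∂ρ + In = ⊤ := top_le_iff.mp step
    rcases ENNReal.add_eq_top.mp this with h | h
    · exact H1 h
    · exact hInfin.ne h
  -- Gibbs at (μb, ν): In ≤ Ip
  have hInIp : In ≤ Ip := by
    have hintb : Integrable (llr μb ν) μb := by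
      refine ⟨(stronglyMeasurable_llr μb ν).aestronglyMeasurable, ?_⟩
      have hbd : ∫⁻ z, (‖llr μb ν z‖₊ : ℝ≥0∞) ∂μb
          ≤ ∫⁻ z, (ENNReal.ofReal (llr μb ν z) + ENNReal.ofReal (-llr μb ν z)) ∂μb := by
        refine lintegral_mono fun z => ?_
        rw [← enorm_eq_nnnorm, Real.enorm_eq_ofReal_abs]
        exact ofReal_abs_le
      rw [lintegral_add_left ((measurable_llr μb ν).ennreal_ofReal)] at hbd
      exact lt_of_le_of_lt hbd
        (ENNReal.add_lt_top.mpr ⟨lt_top_iff_ne_top.mpr hIpfin, hInfin⟩)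
    have h0 : 0 ≤ ∫ z, llr μb ν z ∂μb := integral_llr_nonneg' μb ν hμbν hintb
    rw [integral_eq_lintegral_pos_part_sub_lintegral_neg_part hintb] at h0
    rw [← ENNReal.ofReal_toReal hInfin.ne, ← ENNReal.ofReal_toReal hIpfin]
    exact ENNReal.ofReal_le_ofReal (by linarith)
  have step2 : ∫⁻ x, klDiv (κ x) μb ∂ρ + Ip ≤ ∫⁻ x, klDiv (κ x) ν ∂ρ + Ip :=
    le_trans step (add_le_add le_rfl hInIp)
  exact (ENNReal.add_le_add_iff_right hIpfin).mp step2
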